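/- For any multiset of items I with the weight assignment above, the optimal number of bins of capacity C needed to pack I satisfies OPT(I) ≥ (3/4)·W(I), where W(I) is the total weight of all items. -/
import Mathlib

open Classical in
/-- Per-bin bound: weight of a feasible bin is at most 4/3. -/
lemma bin_weight_le (C : ℝ) (hC : 0 < C) {ι : Type*} (size : ι → ℝ) (combined : ι → Bool)
    (s : Finset ι) (hpos : ∀ i ∈ s, C / 8 < size i)
    (hcap : ∑ i ∈ s, size i ≤ C)
    (hs : ∀ i ∈ s, C / 2 < size i → combined i = false →
      ∀ j ∈ s, j ≠ i → ¬ (C / 4 < size j ∧ size j ≤ C / 2)) :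
    ∑ i ∈ s, (if C / 2 < size i then (if combined i then (5/6 : ℝ) else 1)
          else if C / 3 < size i then 1/2
          else if C / 4 < size i then 1/3 else 0) ≤ 4/3 := by
  classical
  set w : ι → ℝ := fun i => if C / 2 < size i then (if combined i then (5/6 : ℝ) else 1)
          else if C / 3 < size i then 1/2
          else if C / 4 < size i then 1/3 else 0 with hw
  set Lb := s.filter (fun i => C / 2 < size i) with hLb
  set s1 := s.filter (fun i => ¬ C / 2 < size i) with hs1
  set Mb := s1.filter (fun i => C / 3 < size i) with hMb
  set s2 := s1.filter (fun i => ¬ C / 3 < size i) with hs2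
  set Sb := s2.filter (fun i => C / 4 < size i) with hSb
  set s3 := s2.filter (fun i => ¬ C / 4 < size i) with hs3
  -- membership facts
  have hLb_mem : ∀ i ∈ Lb, i ∈ s ∧ C / 2 < size i := by
    intro i hi; rw [hLb, Finset.mem_filter] at hi; exact hi
  have hMb_mem : ∀ i ∈ Mb, i ∈ s ∧ C / 3 < size i ∧ size i ≤ C / 2 := by
    intro i hi
    rw [hMb, Finset.mem_filter, hs1, Finset.mem_filter] at hi
    exact ⟨hi.1.1, hi.2, le_of_not_gt hi.1.2⟩
  have hSb_mem : ∀ i ∈ Sb, i ∈ s ∧ C / 4 < size i ∧ size i ≤ C / 3 := by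
    intro i hi
    rw [hSb, Finset.mem_filter, hs2, Finset.mem_filter, hs1, Finset.mem_filter] at hi
    exact ⟨hi.1.1.1, hi.2, le_of_not_gt hi.1.2⟩
  have hs3_mem : ∀ i ∈ s3, i ∈ s := by
    intro i hi
    rw [hs3, Finset.mem_filter, hs2, Finset.mem_filter, hs1, Finset.mem_filter] at hi
    exact hi.1.1.1
  -- sum decompositions (for any function g)
  have hsplit : ∀ g : ι → ℝ, ∑ i ∈ s, g i
      = ∑ i ∈ Lb, g i + (∑ i ∈ Mb, g i + (∑ i ∈ Sb, g i + ∑ i ∈ s3, g i)) := by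
    intro g
    have h1 := Finset.sum_filter_add_sum_filter_not s (fun i => C / 2 < size i) g
    have h2 := Finset.sum_filter_add_sum_filter_not s1 (fun i => C / 3 < size i) g
    have h3 := Finset.sum_filter_add_sum_filter_not s2 (fun i => C / 4 < size i) g
    simp only [← hLb, ← hs1] at h1
    simp only [← hMb, ← hs2] at h2
    simp only [← hSb, ← hs3] at h3
    linarith
  set m := Mb.card with hm
  set ss := Sb.card with hss
  -- weight values on each part
  have hwM : ∑ i ∈ Mb, w i = (m : ℝ) * (1/2) := by
    rw [Finset.sum_congr rfl (fun i hi => ?_), Finset.sum_const, nsmul_eq_mul]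
    obtain ⟨_, h1, h2⟩ := hMb_mem i hi
    simp only [hw]
    rw [if_neg (by linarith), if_pos h1]
  have hwS : ∑ i ∈ Sb, w i = (ss : ℝ) * (1/3) := by
    rw [Finset.sum_congr rfl (fun i hi => ?_), Finset.sum_const, nsmul_eq_mul]
    obtain ⟨_, h1, h2⟩ := hSb_mem i hi
    simp only [hw]
    rw [if_neg (by linarith), if_neg (by linarith), if_pos h1]
  have hws3 : ∑ i ∈ s3, w i = 0 := by
    apply Finset.sum_eq_zero
    intro i hi
    rw [hs3, Finset.mem_filter, hs2, Finset.mem_filter, hs1, Finset.mem_filter] at hi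
    simp only [hw]
    rw [if_neg hi.1.1.2, if_neg hi.1.2, if_neg hi.2]
  -- size lower bounds
  have hsM : (m : ℝ) * (C/3) ≤ ∑ i ∈ Mb, size i := by
    have := Finset.card_nsmul_le_sum Mb size (C/3)
      (fun i hi => le_of_lt (hMb_mem i hi).2.1)
    rwa [nsmul_eq_mul] at this
  have hsS : (ss : ℝ) * (C/4) ≤ ∑ i ∈ Sb, size i := by
    have := Finset.card_nsmul_le_sum Sb size (C/4)
      (fun i hi => le_of_lt (hSb_mem i hi).2.1)
    rwa [nsmul_eq_mul] at this
  have hsMlt : Mb.Nonempty → (m : ℝ) * (C/3) < ∑ i ∈ Mb, size i := by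
    intro hne
    have := Finset.sum_lt_sum_of_nonempty hne
      (f := fun _ => C/3) (g := size) (fun i hi => (hMb_mem i hi).2.1)
    rwa [Finset.sum_const, nsmul_eq_mul] at this
  have hsSlt : Sb.Nonempty → (ss : ℝ) * (C/4) < ∑ i ∈ Sb, size i := by
    intro hne
    have := Finset.sum_lt_sum_of_nonempty hne
      (f := fun _ => C/4) (g := size) (fun i hi => (hSb_mem i hi).2.1)
    rwa [Finset.sum_const, nsmul_eq_mul] at this
  have hs3pos : (0 : ℝ) ≤ ∑ i ∈ s3, size i :=
    Finset.sum_nonneg (fun i hi => le_of_lt (lt_trans (by linarith) (hpos i (hs3_mem i hi))))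
  have hLpos : (0 : ℝ) ≤ ∑ i ∈ Lb, size i :=
    Finset.sum_nonneg (fun i hi => le_of_lt (lt_trans (by linarith) (hpos i (hLb_mem i hi).1)))
  have hcap' := hcap
  rw [hsplit size] at hcap'
  rw [hsplit w, hwM, hwS, hws3]
  -- case analysis on |Lb|
  rcases Nat.lt_or_ge Lb.card 2 with hcard | hcard
  · interval_cases h : Lb.card
    · -- no large item
      have hLbe : Lb = ∅ := Finset.card_eq_zero.mp h
      have hwL : ∑ i ∈ Lb, w i = 0 := by rw [hLbe]; simp
      have hsL : ∑ i ∈ Lb, size i = 0 := by rw [hLbe]; simp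
      have h11 : 4 * m + 3 * ss ≤ 11 := by
        by_cases hMne : Mb.Nonempty
        · have := hsMlt hMne
          have hlt : (m : ℝ) * (C/3) + (ss : ℝ) * (C/4) < C := by linarith
          have hx : ((4 * m + 3 * ss : ℕ) : ℝ) < ((12 : ℕ) : ℝ) := by
            push_cast; nlinarith
          have := (Nat.cast_lt (α := ℝ)).mp hx
          omega
        · by_cases hSne : Sb.Nonempty
          · have := hsSlt hSne
            have hm0 : m = 0 := by
              rw [hm, Finset.card_eq_zero.mpr (Finset.not_nonempty_iff_eq_empty.mp hMne)]
            have hlt : (ss : ℝ) * (C/4) < C := by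
              have hM0 : ∑ i ∈ Mb, size i = 0 := by
                rw [Finset.not_nonempty_iff_eq_empty.mp hMne]; simp
              linarith
            have hx : ((3 * ss : ℕ) : ℝ) < ((12 : ℕ) : ℝ) := by push_cast; nlinarith
            have := (Nat.cast_lt (α := ℝ)).mp hx
            omega
          · have hm0 : m = 0 := by
              rw [hm, Finset.card_eq_zero.mpr (Finset.not_nonempty_iff_eq_empty.mp hMne)]
            have hss0 : ss = 0 := by
              rw [hss, Finset.card_eq_zero.mpr (Finset.not_nonempty_iff_eq_empty.mp hSne)]
            omega
      have h8 : 3 * m + 2 * ss ≤ 8 := by omega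
      have h8' : (3 * m + 2 * ss : ℝ) ≤ 8 := by exact_mod_cast h8
      rw [hwL]
      push_cast at h8'
      linarith
    · -- exactly one large item
      obtain ⟨i0, hi0⟩ := Finset.card_eq_one.mp h
      have hi0L : i0 ∈ Lb := by rw [hi0]; exact Finset.mem_singleton_self i0
      obtain ⟨hi0s, hi0big⟩ := hLb_mem i0 hi0L
      have hwL : ∑ i ∈ Lb, w i = w i0 := by rw [hi0]; simp
      have hsL : ∑ i ∈ Lb, size i = size i0 := by rw [hi0]; simp
      have hrem : (m : ℝ) * (C/3) + (ss : ℝ) * (C/4) < C / 2 := by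
        rw [hsL] at hcap'
        linarith
      cases hcb : combined i0 with
      | true =>
        have hwi0 : w i0 = 5/6 := by simp only [hw]; rw [if_pos hi0big, if_pos hcb]
        have h5 : 4 * m + 3 * ss ≤ 5 := by
          have hx : ((4 * m + 3 * ss : ℕ) : ℝ) < ((6 : ℕ) : ℝ) := by push_cast; nlinarith
          have := (Nat.cast_lt (α := ℝ)).mp hx
          omega
        have h3 : 3 * m + 2 * ss ≤ 3 := by omega
        have h3' : (3 * m + 2 * ss : ℝ) ≤ 3 := by exact_mod_cast h3
        rw [hwL, hwi0]
        push_cast at h3'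
        linarith
      | false =>
        -- single large item: no medium or small items
        have hnone : ∀ j ∈ s, j ≠ i0 → ¬ (C / 4 < size j ∧ size j ≤ C / 2) :=
          hs i0 hi0s hi0big hcb
        have hMe : Mb = ∅ := by
          rw [Finset.eq_empty_iff_forall_notMem]
          intro i hi
          obtain ⟨his, h1, h2⟩ := hMb_mem i hi
          have hne : i ≠ i0 := by
            intro hEq; rw [hEq] at h2; linarith
          exact hnone i his hne ⟨by linarith, h2⟩
        have hSe : Sb = ∅ := by
          rw [Finset.eq_empty_iff_forall_notMem]
          intro i hi
          obtain ⟨his, h1, h2⟩ := hSb_mem i hi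
          have hne : i ≠ i0 := by
            intro hEq; rw [hEq] at h2; linarith
          exact hnone i his hne ⟨h1, by linarith⟩
        have hm0 : m = 0 := by rw [hm, hMe]; simp
        have hss0 : ss = 0 := by rw [hss, hSe]; simp
        have hwi0 : w i0 ≤ 1 := by
          simp only [hw]
          rw [if_pos hi0big, if_neg (by rw [hcb]; simp)]
        rw [hwL, hm0, hss0]
        push_cast
        linarith
  · -- two large items: contradiction
    exfalso
    obtain ⟨i, hi, j, hj, hij⟩ := Finset.one_lt_card.mp hcard
    have hge : size i + size j ≤ ∑ k ∈ Lb, size k := by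
      have hsub : ({i, j} : Finset ι) ⊆ Lb := by
        intro k hk
        rw [Finset.mem_insert, Finset.mem_singleton] at hk
        rcases hk with rfl | rfl <;> assumption
      have := Finset.sum_le_sum_of_subset_of_nonneg hsub
        (fun k hk _ => le_of_lt (lt_trans (by linarith) (hpos k (hLb_mem k hk).1)))
      rwa [Finset.sum_pair hij] at this
    have h1 := (hLb_mem i hi).2
    have h2 := (hLb_mem j hj).2
    nlinarith [hsM, hsS, hs3pos]

open Classical in
/-- (Lemma 2.) For any multiset of items with the weight assignment
(single L = 1, combined L = 5/6, M = 1/2, S = 1/3, T = 0), the optimal number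
of capacity-`C` bins `OPT` satisfies `(3/4) * W(I) ≤ OPT`,
i.e. `W(I) ≤ (4/3) * OPT`. -/
theorem weight_le_opt (C : ℝ) (hC : 0 < C) (ι : Type*) [Fintype ι]
    (size : ι → ℝ) (combined : ι → Bool)
    (hsize : ∀ i, C / 8 < size i ∧ size i ≤ C)
    (OPT : ℕ) (f : ι → Fin OPT)
    (hfeas : ∀ b, ∑ i ∈ Finset.univ.filter (fun i => f i = b), size i ≤ C)
    (hsingle : ∀ i, C / 2 < size i → combined i = false →
      ∀ j, f j = f i → j ≠ i → ¬ (C / 4 < size j ∧ size j ≤ C / 2))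
    (hmin : ∀ (n : ℕ) (g : ι → Fin n),
      (∀ b, ∑ i ∈ Finset.univ.filter (fun i => g i = b), size i ≤ C) → OPT ≤ n) :
    (3/4 : ℝ) * (∑ i, (if C / 2 < size i then (if combined i then (5/6 : ℝ) else 1)
          else if C / 3 < size i then 1/2
          else if C / 4 < size i then 1/3 else 0)) ≤ OPT := by
  classical
  set w : ι → ℝ := fun i => if C / 2 < size i then (if combined i then (5/6 : ℝ) else 1)
          else if C / 3 < size i then 1/2
          else if C / 4 < size i then 1/3 else 0 with hw
  have key : ∑ i, w i ≤ (OPT : ℝ) * (4/3) := by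
    have hfib : ∑ b : Fin OPT, ∑ i ∈ Finset.univ.filter (fun i => f i = b), w i
        = ∑ i, w i := by
      exact Finset.sum_fiberwise Finset.univ f w
    rw [← hfib]
    calc ∑ b : Fin OPT, ∑ i ∈ Finset.univ.filter (fun i => f i = b), w i
        ≤ ∑ _b : Fin OPT, (4/3 : ℝ) := by
          apply Finset.sum_le_sum
          intro b _
          apply bin_weight_le C hC size combined
          · intro i _; exact (hsize i).1
          · exact hfeas b
          · intro i hi hL hcomb j hj hne
            rw [Finset.mem_filter] at hi hj
            exact hsingle i hL hcomb j (hj.2.trans hi.2.symm) hne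
      _ = (OPT : ℝ) * (4/3) := by
          rw [Finset.sum_const, Finset.card_univ, Fintype.card_fin, nsmul_eq_mul]
  linarith
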